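/- arXiv:1607.08498 — 7 statements merged into one kernel-verified Lean document; each statement's English description precedes it below -/
import Mathlib

section
/- Let (x*, λ*, μ*) satisfy the KKT conditions for the problem min f(x) subject to l ≤ x ≤ u, i.e. x* ∈ [l,u], g(x*) − λ* + μ* = 0, (l_i − x*_i)λ*_i = 0, (x*_i − u_i)μ*_i = 0, and λ*_i ≥ 0, μ*_i ≥ 0 for all i. Then there exists ρ > 0 such that for every x ∈ [l,u] with ‖x − x*‖ < ρ one has {i : x*_i = l_i and λ*_i > 0} ⊆ A_l(x) ⊆ {i : x*_i = l_i} and {i : x*_i = u_i and μ*_i > 0} ⊆ A_u(x) ⊆ {i : x*_i = u_i}. -/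
open Finset

/-- The gradient of `f` at `x`: its `i`-th component is the partial derivative of `f`
in the `i`-th coordinate direction (the Euclidean gradient). -/
noncomputable def grad {n : ℕ} (f : (Fin n → ℝ) → ℝ) (x : Fin n → ℝ) (i : Fin n) : ℝ :=
  fderiv ℝ f x (Pi.single i 1)

/-- The multiplier function `λ_i(x)`. -/
noncomputable def lamMul {n : ℕ} (f : (Fin n → ℝ) → ℝ) (l u x : Fin n → ℝ) (i : Fin n) : ℝ :=
  (u i - x i) ^ 2 / ((l i - x i) ^ 2 + (u i - x i) ^ 2) * grad f x i

/-- The multiplier function `μ_i(x)`. -/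
noncomputable def muMul {n : ℕ} (f : (Fin n → ℝ) → ℝ) (l u x : Fin n → ℝ) (i : Fin n) : ℝ :=
  -((l i - x i) ^ 2 / ((l i - x i) ^ 2 + (u i - x i) ^ 2) * grad f x i)

/-- The estimate `A_l(x)` of the variables active at the lower bound. -/
def estAl {n : ℕ} (f : (Fin n → ℝ) → ℝ) (l u : Fin n → ℝ) (ε : ℝ) (x : Fin n → ℝ) :
    Set (Fin n) :=
  {i | l i ≤ x i ∧ x i ≤ l i + ε * lamMul f l u x i ∧ 0 < grad f x i}

/-- The estimate `A_u(x)` of the variables active at the upper bound. -/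
def estAu {n : ℕ} (f : (Fin n → ℝ) → ℝ) (l u : Fin n → ℝ) (ε : ℝ) (x : Fin n → ℝ) :
    Set (Fin n) :=
  {i | u i - ε * muMul f l u x i ≤ x i ∧ x i ≤ u i ∧ grad f x i < 0}

/-- The estimate `N(x)` of the non-active variables. -/
def estN {n : ℕ} (f : (Fin n → ℝ) → ℝ) (l u : Fin n → ℝ) (ε : ℝ) (x : Fin n → ℝ) :
    Set (Fin n) :=
  {i | i ∉ estAl f l u ε x ∧ i ∉ estAu f l u ε x}

/-- Componentwise projection onto the box `[l, u]`. -/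
def projBox {n : ℕ} (l u y : Fin n → ℝ) : Fin n → ℝ :=
  fun i => min (u i) (max (l i) (y i))

/-- First-order optimality (stationarity) conditions at a feasible point. -/
def IsStationaryBox {n : ℕ} (f : (Fin n → ℝ) → ℝ) (l u x : Fin n → ℝ) : Prop :=
  ∀ i, (x i = l i → 0 ≤ grad f x i) ∧ (x i = u i → grad f x i ≤ 0) ∧
    (l i < x i → x i < u i → grad f x i = 0)

open Filter Topology

/-!
At a strongly active lower index (`x*ᵢ = lᵢ`, `λ*ᵢ > 0`) the weight in `λᵢ` equals `1`, so
`λᵢ(x*) = gᵢ(x*) = λ*ᵢ > 0` and the defining strict inequalities of `A_l` hold at `x*`, hence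
nearby. Conversely, since the weight never exceeds `1`, every `i ∈ A_l(x)` satisfies
`xᵢ ≤ lᵢ + ε gᵢ(x)`; when `x*ᵢ > lᵢ`, complementarity gives `gᵢ(x*) = -μ*ᵢ ≤ 0`, so the reverse
strict inequality holds at `x*` and hence nearby. The upper bound is symmetric, and finitely many
neighbourhoods intersect in a ball.
-/

theorem dist_le_sqrt_sum_sq {ι : Type*} [Fintype ι] (x y : ι → ℝ) :
    dist x y ≤ √(∑ i, (x i - y i) ^ 2) := by
  have h := (PiLp.lipschitzWith_ofLp 2 fun _ : ι => ℝ).dist_le_mul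
    (WithLp.toLp 2 x) (WithLp.toLp 2 y)
  simpa [EuclideanSpace.dist_eq, Real.dist_eq, sq_abs] using h

theorem sq_sub_add_sq_sub_pos {a b : ℝ} (h : a < b) (x : ℝ) : 0 < (a - x) ^ 2 + (b - x) ^ 2 := by
  nlinarith [sq_nonneg (a + b - 2 * x), mul_pos (sub_pos.2 h) (sub_pos.2 h)]

theorem continuous_grad {n : ℕ} {f : (Fin n → ℝ) → ℝ} (hf : ContDiff ℝ 1 f) (i : Fin n) :
    Continuous fun x => grad f x i :=
  (hf.continuous_fderiv one_ne_zero).clm_apply continuous_const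

section Estimates

variable {n : ℕ} {f : (Fin n → ℝ) → ℝ} {l u x xs : Fin n → ℝ} {ε : ℝ} {i : Fin n}

theorem lamMul_le_grad (hg : 0 ≤ grad f x i) : lamMul f l u x i ≤ grad f x i :=
  mul_le_of_le_one_left hg
    (div_le_one_of_le₀ (le_add_of_nonneg_left (sq_nonneg _)) (by positivity))

theorem muMul_le_neg_grad (hg : grad f x i ≤ 0) : muMul f l u x i ≤ -grad f x i :=
  neg_le_neg <| le_mul_of_le_one_left hg
    (div_le_one_of_le₀ (le_add_of_nonneg_right (sq_nonneg _)) (by positivity))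

theorem lamMul_eq_grad_of_eq_lower (hlu : l i < u i) (hx : x i = l i) :
    lamMul f l u x i = grad f x i := by
  have : (u i - l i) ^ 2 ≠ 0 := pow_ne_zero 2 (sub_pos.2 hlu).ne'
  simp [lamMul, hx, this]

theorem muMul_eq_neg_grad_of_eq_upper (hlu : l i < u i) (hx : x i = u i) :
    muMul f l u x i = -grad f x i := by
  have : (l i - u i) ^ 2 ≠ 0 := pow_ne_zero 2 (sub_neg.2 hlu).ne
  simp [muMul, hx, this]

theorem continuousAt_lamMul (hg : ContinuousAt (fun x => grad f x i) xs) (hlu : l i < u i) :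
    ContinuousAt (fun x => lamMul f l u x i) xs := by
  unfold lamMul
  have := (sq_sub_add_sq_sub_pos hlu (xs i)).ne'
  fun_prop (disch := assumption)

theorem continuousAt_muMul (hg : ContinuousAt (fun x => grad f x i) xs) (hlu : l i < u i) :
    ContinuousAt (fun x => muMul f l u x i) xs := by
  unfold muMul
  have := (sq_sub_add_sq_sub_pos hlu (xs i)).ne'
  fun_prop (disch := assumption)

theorem notMem_estAl_of_lt (hε : 0 ≤ ε) (h : l i + ε * grad f x i < x i) :
    i ∉ estAl f l u ε x := fun ⟨_, hle, hpos⟩ =>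
  h.not_ge (hle.trans (by gcongr; exact lamMul_le_grad hpos.le))

theorem notMem_estAu_of_lt (hε : 0 ≤ ε) (h : x i < u i + ε * grad f x i) :
    i ∉ estAu f l u ε x := fun ⟨hle, _, hneg⟩ => by
  have := mul_le_mul_of_nonneg_left (muMul_le_neg_grad (l := l) (u := u) hneg.le) hε
  linarith

theorem eventually_mem_estAl (hg : ContinuousAt (fun x => grad f x i) xs) (hlu : l i < u i)
    (hε : 0 < ε) (hxs : xs i = l i) (hpos : 0 < grad f xs i) :
    ∀ᶠ x in 𝓝 xs, l i ≤ x i → i ∈ estAl f l u ε x := by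
  have hlt : xs i < l i + ε * lamMul f l u xs i := by
    rw [lamMul_eq_grad_of_eq_lower hlu hxs, hxs]
    exact lt_add_of_pos_right _ (mul_pos hε hpos)
  filter_upwards [(continuous_apply i).continuousAt.eventually_lt
      (continuousAt_const.add (continuousAt_const.mul (continuousAt_lamMul hg hlu))) hlt,
    continuousAt_const.eventually_lt hg hpos] with x hx hgx hlx
  exact ⟨hlx, hx.le, hgx⟩

theorem eventually_mem_estAu (hg : ContinuousAt (fun x => grad f x i) xs) (hlu : l i < u i)
    (hε : 0 < ε) (hxs : xs i = u i) (hneg : grad f xs i < 0) :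
    ∀ᶠ x in 𝓝 xs, x i ≤ u i → i ∈ estAu f l u ε x := by
  have hlt : u i - ε * muMul f l u xs i < xs i := by
    rw [muMul_eq_neg_grad_of_eq_upper hlu hxs, hxs]
    exact sub_lt_self _ (mul_pos hε (neg_pos.2 hneg))
  filter_upwards [(continuousAt_const.sub
      (continuousAt_const.mul (continuousAt_muMul hg hlu))).eventually_lt
      (continuous_apply i).continuousAt hlt,
    hg.eventually_lt continuousAt_const hneg] with x hx hgx hux
  exact ⟨hx.le, hux, hgx⟩

theorem eventually_notMem_estAl (hg : ContinuousAt (fun x => grad f x i) xs) (hε : 0 ≤ ε)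
    (h : l i + ε * grad f xs i < xs i) : ∀ᶠ x in 𝓝 xs, i ∉ estAl f l u ε x :=
  ((continuousAt_const.add (continuousAt_const.mul hg)).eventually_lt
    (continuous_apply i).continuousAt h).mono fun _ => notMem_estAl_of_lt hε

theorem eventually_notMem_estAu (hg : ContinuousAt (fun x => grad f x i) xs) (hε : 0 ≤ ε)
    (h : xs i < u i + ε * grad f xs i) : ∀ᶠ x in 𝓝 xs, i ∉ estAu f l u ε x :=
  ((continuous_apply i).continuousAt.eventually_lt
    (continuousAt_const.add (continuousAt_const.mul hg)) h).mono fun _ => notMem_estAu_of_lt hε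

end Estimates

section Identification

variable {n : ℕ} {f : (Fin n → ℝ) → ℝ} {l u xs : Fin n → ℝ} {ε lam mu : ℝ} {i : Fin n}

theorem eventually_estAl_identifies (hg : ContinuousAt (fun x => grad f x i) xs)
    (hlu : l i < u i) (hε : 0 < ε) (hfeas : l i ≤ xs i) (hstat : grad f xs i - lam + mu = 0)
    (hcl : (l i - xs i) * lam = 0) (hcu : (xs i - u i) * mu = 0) (hmu : 0 ≤ mu) :
    ∀ᶠ x in 𝓝 xs, (xs i = l i ∧ 0 < lam → l i ≤ x i → i ∈ estAl f l u ε x) ∧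
      (i ∈ estAl f l u ε x → xs i = l i) := by
  rcases hfeas.eq_or_lt with hl | hl
  · have hmu0 : mu = 0 :=
      (mul_eq_zero.1 hcu).resolve_left (sub_ne_zero.2 (hl ▸ hlu.ne))
    have hgrad : grad f xs i = lam := by linarith
    by_cases hlam : 0 < lam
    · filter_upwards [eventually_mem_estAl hg hlu hε hl.symm (hgrad ▸ hlam)] with x hx
      exact ⟨fun _ => hx, fun _ => hl.symm⟩
    · exact .of_forall fun _ => ⟨fun h => absurd h.2 hlam, fun _ => hl.symm⟩
  · have hlam0 : lam = 0 := (mul_eq_zero.1 hcl).resolve_left (sub_ne_zero.2 hl.ne)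
    have hlt : l i + ε * grad f xs i < xs i := by nlinarith
    filter_upwards [eventually_notMem_estAl hg hε.le hlt] with x hx
    exact ⟨fun h => absurd h.1 hl.ne', fun h => absurd h hx⟩

theorem eventually_estAu_identifies (hg : ContinuousAt (fun x => grad f x i) xs)
    (hlu : l i < u i) (hε : 0 < ε) (hfeas : xs i ≤ u i) (hstat : grad f xs i - lam + mu = 0)
    (hcl : (l i - xs i) * lam = 0) (hcu : (xs i - u i) * mu = 0) (hlam : 0 ≤ lam) :
    ∀ᶠ x in 𝓝 xs, (xs i = u i ∧ 0 < mu → x i ≤ u i → i ∈ estAu f l u ε x) ∧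
      (i ∈ estAu f l u ε x → xs i = u i) := by
  rcases hfeas.eq_or_lt with hu | hu
  · have hlam0 : lam = 0 :=
      (mul_eq_zero.1 hcl).resolve_left (sub_ne_zero.2 (hu ▸ hlu.ne))
    have hgrad : grad f xs i = -mu := by linarith
    by_cases hmu : 0 < mu
    · filter_upwards [eventually_mem_estAu hg hlu hε hu (by linarith)] with x hx
      exact ⟨fun _ => hx, fun _ => hu⟩
    · exact .of_forall fun _ => ⟨fun h => absurd h.2 hmu, fun _ => hu⟩
  · have hmu0 : mu = 0 := (mul_eq_zero.1 hcu).resolve_left (sub_ne_zero.2 hu.ne)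
    have hlt : xs i < u i + ε * grad f xs i := by nlinarith
    filter_upwards [eventually_notMem_estAu hg hε.le hlt] with x hx
    exact ⟨fun h => absurd h.1 hu.ne, fun h => absurd h hx⟩

end Identification

/-- near a KKT point, the active-set estimates are sandwiched between the
strongly active constraints and the active constraints. -/
theorem active_set_identification {n : ℕ} (f : (Fin n → ℝ) → ℝ) (hf : ContDiff ℝ 2 f)
    (l u : Fin n → ℝ) (hlu : ∀ i, l i < u i) (ε : ℝ) (hε : 0 < ε)
    (xs lam mu : Fin n → ℝ)
    (hfeas : ∀ i, l i ≤ xs i ∧ xs i ≤ u i)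
    (hkkt1 : ∀ i, grad f xs i - lam i + mu i = 0)
    (hkkt2 : ∀ i, (l i - xs i) * lam i = 0)
    (hkkt3 : ∀ i, (xs i - u i) * mu i = 0)
    (hkkt4 : ∀ i, 0 ≤ lam i ∧ 0 ≤ mu i) :
    ∃ ρ > (0 : ℝ), ∀ x : Fin n → ℝ, (∀ i, l i ≤ x i ∧ x i ≤ u i) →
      Real.sqrt (∑ i, (x i - xs i) ^ 2) < ρ →
      ({i | xs i = l i ∧ 0 < lam i} ⊆ estAl f l u ε x ∧
        estAl f l u ε x ⊆ {i | xs i = l i}) ∧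
      ({i | xs i = u i ∧ 0 < mu i} ⊆ estAu f l u ε x ∧
        estAu f l u ε x ⊆ {i | xs i = u i}) := by
  have hg i : ContinuousAt (fun x => grad f x i) xs :=
    (continuous_grad (hf.of_le (by norm_num)) i).continuousAt
  have hev := eventually_all.2 fun i =>
    (eventually_estAl_identifies (ε := ε) (hg i) (hlu i) hε (hfeas i).1 (hkkt1 i) (hkkt2 i)
      (hkkt3 i) (hkkt4 i).2).and
    (eventually_estAu_identifies (hg i) (hlu i) hε (hfeas i).2 (hkkt1 i) (hkkt2 i)
      (hkkt3 i) (hkkt4 i).1)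
  obtain ⟨ρ, hρ, hball⟩ := Metric.eventually_nhds_iff.1 hev
  refine ⟨ρ, hρ, fun x hx hdist => ?_⟩
  have hP := hball ((dist_le_sqrt_sum_sq x xs).trans_lt hdist)
  exact ⟨⟨fun i hi => (hP i).1.1 hi (hx i).1, fun i hi => (hP i).1.2 hi⟩,
    ⟨fun i hi => (hP i).2.1 hi (hx i).2, fun i hi => (hP i).2.2 hi⟩⟩
end

section
/- A point x̄ ∈ [l,u] is a stationary point of min f(x) subject to l ≤ x ≤ u if and only if the following conditions hold: max{l_i − x̄_i, −g_i(x̄)} = 0 for all i ∈ A_l(x̄); max{x̄_i − u_i, g_i(x̄)} = 0 for all i ∈ A_u(x̄); and g_i(x̄) = 0 for all i ∈ N(x̄). -/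
open Finset

/-- First-order optimality (stationarity) conditions at a feasible point. -/
def IsBoxStationary {n : ℕ} (f : (Fin n → ℝ) → ℝ) (l u x : Fin n → ℝ) : Prop :=
  ∀ i, (x i = l i → 0 ≤ grad f x i) ∧ (x i = u i → grad f x i ≤ 0) ∧
    (l i < x i → x i < u i → grad f x i = 0)

/-!
Stationarity and the three conditions are both coordinatewise. On `A_l(x)` the partial
derivative is positive, so stationarity forces `x_i = l_i`, which is exactly what
`max (l_i - x_i) (-g_i) = 0` says; `A_u(x)` is symmetric. Off `A_l(x) ∪ A_u(x)`, a coordinate at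
its lower bound with `g_i > 0` would satisfy `x_i ≤ l_i + ε λ_i` since `ε λ_i ≥ 0`, and so lie in
`A_l(x)` (symmetrically at the upper bound); hence there stationarity is just `g_i = 0`.
-/

def IsStationaryCoord (l u x g : ℝ) : Prop :=
  (x = l → 0 ≤ g) ∧ (x = u → g ≤ 0) ∧ (l < x → x < u → g = 0)

theorem isBoxStationary_iff {n : ℕ} (f : (Fin n → ℝ) → ℝ) (l u x : Fin n → ℝ) :
    IsBoxStationary f l u x ↔ ∀ i, IsStationaryCoord (l i) (u i) (x i) (grad f x i) :=
  Iff.rfl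

theorem max_eq_iff_of_right_lt {α : Type*} [LinearOrder α] {a b c : α} (hb : b < c) :
    max a b = c ↔ a = c := by
  constructor
  · intro h
    rcases max_choice a b with hmax | hmax <;> rw [hmax] at h
    · exact h
    · exact absurd h hb.ne
  · rintro rfl
    exact max_eq_left hb.le

namespace IsStationaryCoord

variable {l u x g : ℝ}

theorem of_eq_zero (hg : g = 0) : IsStationaryCoord l u x g :=
  ⟨fun _ => hg.ge, fun _ => hg.le, fun _ _ => hg⟩

theorem iff_eq_lower (hlu : l < u) (hlx : l ≤ x) (hxu : x ≤ u) (hg : 0 < g) :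
    IsStationaryCoord l u x g ↔ x = l := by
  constructor
  · rintro ⟨-, hupper, hinterior⟩
    rcases hxu.lt_or_eq with hxu | rfl
    · rcases hlx.lt_or_eq with hlx | rfl
      · exact absurd (hinterior hlx hxu) hg.ne'
      · rfl
    · exact absurd (hupper rfl) hg.not_ge
  · rintro rfl
    exact ⟨fun _ => hg.le, fun h => absurd h hlu.ne, fun h _ => absurd h (lt_irrefl x)⟩

theorem iff_eq_upper (hlu : l < u) (hlx : l ≤ x) (hxu : x ≤ u) (hg : g < 0) :
    IsStationaryCoord l u x g ↔ x = u := by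
  constructor
  · rintro ⟨hlower, -, hinterior⟩
    rcases hlx.lt_or_eq with hlx | rfl
    · rcases hxu.lt_or_eq with hxu | rfl
      · exact absurd (hinterior hlx hxu) hg.ne
      · rfl
    · exact absurd (hlower rfl) hg.not_ge
  · rintro rfl
    exact ⟨fun h => absurd h hlu.ne', fun _ => hg.le, fun _ h => absurd h (lt_irrefl x)⟩

theorem eq_zero (hS : IsStationaryCoord l u x g) (hlx : l ≤ x) (hxu : x ≤ u)
    (hlower : x = l → g ≤ 0) (hupper : x = u → 0 ≤ g) : g = 0 := by
  rcases hlx.lt_or_eq with hlx | hxl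
  · rcases hxu.lt_or_eq with hxu | hxu
    · exact hS.2.2 hlx hxu
    · exact le_antisymm (hS.2.1 hxu) (hupper hxu)
  · exact le_antisymm (hlower hxl.symm) (hS.1 hxl.symm)

end IsStationaryCoord

section Estimates

variable {n : ℕ} {f : (Fin n → ℝ) → ℝ} {l u x : Fin n → ℝ} {ε : ℝ} {i : Fin n}

theorem lamMul_nonneg (hg : 0 ≤ grad f x i) : 0 ≤ lamMul f l u x i :=
  mul_nonneg (div_nonneg (sq_nonneg _) (by positivity)) hg

theorem muMul_nonneg (hg : grad f x i ≤ 0) : 0 ≤ muMul f l u x i :=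
  neg_nonneg.2 (mul_nonpos_of_nonneg_of_nonpos (div_nonneg (sq_nonneg _) (by positivity)) hg)

theorem mem_estAl_of_eq (hε : 0 ≤ ε) (hxl : x i = l i) (hg : 0 < grad f x i) :
    i ∈ estAl f l u ε x :=
  ⟨hxl.ge, by linarith [mul_nonneg hε (lamMul_nonneg (l := l) (u := u) hg.le)], hg⟩

theorem mem_estAu_of_eq (hε : 0 ≤ ε) (hxu : x i = u i) (hg : grad f x i < 0) :
    i ∈ estAu f l u ε x :=
  ⟨by linarith [mul_nonneg hε (muMul_nonneg (l := l) (u := u) hg.le)], hxu.le, hg⟩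

theorem notMem_estAu_of_mem_estAl (h : i ∈ estAl f l u ε x) : i ∉ estAu f l u ε x :=
  fun h' => (h.2.2.trans h'.2.2).false

theorem isStationaryCoord_iff_estimates (hlu : l i < u i) (hε : 0 ≤ ε)
    (hx : l i ≤ x i ∧ x i ≤ u i) :
    IsStationaryCoord (l i) (u i) (x i) (grad f x i) ↔
      ((i ∈ estAl f l u ε x → max (l i - x i) (-(grad f x i)) = 0) ∧
       (i ∈ estAu f l u ε x → max (x i - u i) (grad f x i) = 0) ∧
       (i ∈ estN f l u ε x → grad f x i = 0)) := by
  by_cases hAl : i ∈ estAl f l u ε x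
  · have hN : i ∉ estN f l u ε x := fun h => h.1 hAl
    simp only [hAl, notMem_estAu_of_mem_estAl hAl, hN, true_implies, false_implies, and_true]
    rw [IsStationaryCoord.iff_eq_lower hlu hx.1 hx.2 hAl.2.2,
      max_eq_iff_of_right_lt (neg_neg_of_pos hAl.2.2), sub_eq_zero, eq_comm]
  by_cases hAu : i ∈ estAu f l u ε x
  · have hN : i ∉ estN f l u ε x := fun h => h.2 hAu
    simp only [hAl, hAu, hN, true_implies, false_implies, true_and, and_true]
    rw [IsStationaryCoord.iff_eq_upper hlu hx.1 hx.2 hAu.2.2,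
      max_eq_iff_of_right_lt hAu.2.2, sub_eq_zero]
  · have hN : i ∈ estN f l u ε x := ⟨hAl, hAu⟩
    simp only [hAl, hAu, hN, true_implies, false_implies, true_and]
    refine ⟨fun hS => hS.eq_zero hx.1 hx.2 ?_ ?_, IsStationaryCoord.of_eq_zero⟩
    · exact fun hxl => not_lt.1 fun hg => hAl (mem_estAl_of_eq hε hxl hg)
    · exact fun hxu => not_lt.1 fun hg => hAu (mem_estAu_of_eq hε hxu hg)

end Estimates

theorem stationarity_characterization_general {n : ℕ} (f : (Fin n → ℝ) → ℝ)
    (l u : Fin n → ℝ) (hlu : ∀ i, l i < u i) (ε : ℝ) (hε : 0 < ε)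
    (x : Fin n → ℝ) (hx : ∀ i, l i ≤ x i ∧ x i ≤ u i) :
    IsBoxStationary f l u x ↔
      ((∀ i ∈ estAl f l u ε x, max (l i - x i) (-(grad f x i)) = 0) ∧
       (∀ i ∈ estAu f l u ε x, max (x i - u i) (grad f x i) = 0) ∧
       (∀ i ∈ estN f l u ε x, grad f x i = 0)) := by
  simp only [isBoxStationary_iff, isStationaryCoord_iff_estimates (hlu _) hε.le (hx _),
    forall_and]

/-- characterization of stationary points via the active-set estimates. -/
theorem stationarity_characterization {n : ℕ} (f : (Fin n → ℝ) → ℝ) (hf : ContDiff ℝ 2 f)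
    (l u : Fin n → ℝ) (hlu : ∀ i, l i < u i) (ε : ℝ) (hε : 0 < ε)
    (x : Fin n → ℝ) (hx : ∀ i, l i ≤ x i ∧ x i ≤ u i) :
    IsBoxStationary f l u x ↔
      ((∀ i ∈ estAl f l u ε x, max (l i - x i) (-(grad f x i)) = 0) ∧
       (∀ i ∈ estAu f l u ε x, max (x i - u i) (grad f x i) = 0) ∧
       (∀ i ∈ estN f l u ε x, grad f x i = 0)) :=
  stationarity_characterization_general f l u hlu ε hε x hx
end

section
/- Let x̄ ∈ [l,u] and assume that {i ∈ A_l(x̄) : x̄_i > l_i} ∪ {i ∈ A_u(x̄) : x̄_i < u_i} = ∅. Then x̄ is a stationary point of min f(x) subject to l ≤ x ≤ u if and only if g_i(x̄) = 0 for all i ∈ N(x̄). -/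
open Finset

/-! On a bound, the weight in `λ_i` (resp. `μ_i`) equals `1`, so for `ε > 0` a partial derivative
of the sign allowed by stationarity there puts `i` into `A_l` (resp. `A_u`); hence on `N` it must
vanish. Conversely, the hypothesis pins every index of `A_l` and `A_u` to its bound, where the sign
condition in the definition of the estimate is exactly the stationarity condition. -/

section ActiveSetEstimates

variable {n : ℕ} {f : (Fin n → ℝ) → ℝ} {l u x : Fin n → ℝ} {ε : ℝ} {i : Fin n}

theorem lamMul_of_eq_lower (hlu : l i ≠ u i) (hxl : x i = l i) :
    lamMul f l u x i = grad f x i := by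
  have hpos : (u i - x i) ^ 2 ≠ 0 := pow_ne_zero 2 (sub_ne_zero.2 (hxl ▸ hlu.symm))
  rw [lamMul, hxl, sub_self, ← hxl, zero_pow two_ne_zero, zero_add, div_self hpos, one_mul]

theorem muMul_of_eq_upper (hlu : l i ≠ u i) (hxu : x i = u i) :
    muMul f l u x i = -grad f x i := by
  have hpos : (l i - x i) ^ 2 ≠ 0 := pow_ne_zero 2 (sub_ne_zero.2 (hxu ▸ hlu))
  rw [muMul, hxu, sub_self, ← hxu, zero_pow two_ne_zero, add_zero, div_self hpos, one_mul]

theorem mem_estAl_of_eq_lower (hlu : l i ≠ u i) (hε : 0 ≤ ε) (hxl : x i = l i)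
    (hg : 0 < grad f x i) : i ∈ estAl f l u ε x := by
  refine ⟨hxl.ge, ?_, hg⟩
  rw [lamMul_of_eq_lower hlu hxl, hxl]
  exact le_add_of_nonneg_right (mul_nonneg hε hg.le)

theorem mem_estAu_of_eq_upper (hlu : l i ≠ u i) (hε : 0 ≤ ε) (hxu : x i = u i)
    (hg : grad f x i < 0) : i ∈ estAu f l u ε x := by
  refine ⟨?_, hxu.le, hg⟩
  rw [muMul_of_eq_upper hlu hxu, hxu]
  exact sub_le_self _ (mul_nonneg hε (neg_nonneg.2 hg.le))

theorem grad_eq_zero_of_mem_estN (hlu : l i < u i) (hε : 0 ≤ ε) (hx : l i ≤ x i ∧ x i ≤ u i)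
    (hs : IsBoxStationary f l u x) (hi : i ∈ estN f l u ε x) : grad f x i = 0 := by
  obtain ⟨hs_lower, hs_upper, hs_free⟩ := hs i
  rcases hx.1.eq_or_lt with hxl | hxl
  · refine ((hs_lower hxl.symm).eq_or_lt.resolve_right fun hg => ?_).symm
    exact hi.1 (mem_estAl_of_eq_lower hlu.ne hε hxl.symm hg)
  rcases hx.2.eq_or_lt with hxu | hxu
  · refine (hs_upper hxu).lt_or_eq.resolve_left fun hg => ?_
    exact hi.2 (mem_estAu_of_eq_upper hlu.ne hε hxu hg)
  exact hs_free hxl hxu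

theorem isBoxStationary_of_estN (hlu : ∀ i, l i < u i)
    (hAl : ∀ i ∈ estAl f l u ε x, x i = l i) (hAu : ∀ i ∈ estAu f l u ε x, x i = u i)
    (hN : ∀ i ∈ estN f l u ε x, grad f x i = 0) : IsBoxStationary f l u x := by
  intro i
  by_cases hil : i ∈ estAl f l u ε x
  · have hxl := hAl i hil
    refine ⟨fun _ => hil.2.2.le, fun hxu => ?_, fun h _ => ?_⟩ <;>
      linarith [hlu i]
  by_cases hiu : i ∈ estAu f l u ε x
  · have hxu := hAu i hiu
    refine ⟨fun hxl => ?_, fun _ => hiu.2.2.le, fun _ h => ?_⟩ <;>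
      linarith [hlu i]
  have hg := hN i ⟨hil, hiu⟩
  exact ⟨fun _ => hg.ge, fun _ => hg.le, fun _ _ => hg⟩

end ActiveSetEstimates

theorem stationarity_iff_free_gradient_zero_general {n : ℕ} (f : (Fin n → ℝ) → ℝ)
    (l u : Fin n → ℝ) (hlu : ∀ i, l i < u i) (ε : ℝ) (hε : 0 < ε)
    (x : Fin n → ℝ) (hx : ∀ i, l i ≤ x i ∧ x i ≤ u i)
    (hempty : {i | i ∈ estAl f l u ε x ∧ l i < x i} ∪
      {i | i ∈ estAu f l u ε x ∧ x i < u i} = ∅) :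
    IsBoxStationary f l u x ↔ ∀ i ∈ estN f l u ε x, grad f x i = 0 := by
  obtain ⟨hAl, hAu⟩ := Set.union_empty_iff.1 hempty
  have hAl_lower : ∀ i ∈ estAl f l u ε x, x i = l i := fun i hi =>
    (hi.1.eq_or_lt.resolve_right fun h => hAl.subset ⟨hi, h⟩).symm
  have hAu_upper : ∀ i ∈ estAu f l u ε x, x i = u i := fun i hi =>
    hi.2.1.eq_or_lt.resolve_right fun h => hAu.subset ⟨hi, h⟩
  exact ⟨fun hs i hi => grad_eq_zero_of_mem_estN (hlu i) hε.le (hx i) hs hi,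
    isBoxStationary_of_estN hlu hAl_lower hAu_upper⟩

/-- if no estimated active variable is strictly inside its bound, then
stationarity is equivalent to the vanishing of the gradient on the non-active estimate. -/
theorem stationarity_iff_free_gradient_zero {n : ℕ} (f : (Fin n → ℝ) → ℝ)
    (hf : ContDiff ℝ 2 f) (l u : Fin n → ℝ) (hlu : ∀ i, l i < u i) (ε : ℝ) (hε : 0 < ε)
    (x : Fin n → ℝ) (hx : ∀ i, l i ≤ x i ∧ x i ≤ u i)
    (hempty : {i | i ∈ estAl f l u ε x ∧ l i < x i} ∪
      {i | i ∈ estAu f l u ε x ∧ x i < u i} = ∅) :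
    IsBoxStationary f l u x ↔ ∀ i ∈ estN f l u ε x, grad f x i = 0 :=
  stationarity_iff_free_gradient_zero_general f l u hlu ε hε x hx hempty
end

section
/- Let x̄ ∈ [l,u] and assume that g_i(x̄) = 0 for all i ∈ N(x̄). Then x̄ is a stationary point of min f(x) subject to l ≤ x ≤ u if and only if {i ∈ A_l(x̄) : x̄_i > l_i} ∪ {i ∈ A_u(x̄) : x̄_i < u_i} = ∅. -/
open Finset

section

variable {n : ℕ} {f : (Fin n → ℝ) → ℝ} {l u x : Fin n → ℝ} {ε : ℝ} {i : Fin n}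

theorem lamMul_eq_zero_of_eq_upper (h : x i = u i) : lamMul f l u x i = 0 := by
  simp [lamMul, h]

theorem muMul_eq_zero_of_eq_lower (h : x i = l i) : muMul f l u x i = 0 := by
  simp [muMul, h]

theorem notMem_estAl_of_eq_upper (hlu : l i < u i) (h : x i = u i) :
    i ∉ estAl f l u ε x := by
  rintro ⟨-, hle, -⟩
  rw [lamMul_eq_zero_of_eq_upper h, mul_zero, add_zero, h] at hle
  exact hle.not_gt hlu

theorem notMem_estAu_of_eq_lower (hlu : l i < u i) (h : x i = l i) :
    i ∉ estAu f l u ε x := by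
  rintro ⟨hge, -, -⟩
  rw [muMul_eq_zero_of_eq_lower h, mul_zero, sub_zero, h] at hge
  exact hge.not_gt hlu

theorem grad_nonneg_of_notMem_estAu (hfree : ∀ j ∈ estN f l u ε x, grad f x j = 0)
    (h : i ∉ estAu f l u ε x) : 0 ≤ grad f x i := by
  by_cases hAl : i ∈ estAl f l u ε x
  · exact hAl.2.2.le
  · exact (hfree i ⟨hAl, h⟩).ge

theorem grad_nonpos_of_notMem_estAl (hfree : ∀ j ∈ estN f l u ε x, grad f x j = 0)
    (h : i ∉ estAl f l u ε x) : grad f x i ≤ 0 := by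
  by_cases hAu : i ∈ estAu f l u ε x
  · exact hAu.2.2.le
  · exact (hfree i ⟨h, hAu⟩).le

theorem IsBoxStationary.grad_nonpos (hs : IsBoxStationary f l u x) (hl : l i < x i)
    (hu : x i ≤ u i) : grad f x i ≤ 0 := by
  rcases hu.lt_or_eq with hu | hu
  · exact ((hs i).2.2 hl hu).le
  · exact (hs i).2.1 hu

theorem IsBoxStationary.grad_nonneg (hs : IsBoxStationary f l u x) (hl : l i ≤ x i)
    (hu : x i < u i) : 0 ≤ grad f x i := by
  rcases hl.lt_or_eq with hl | hl
  · exact ((hs i).2.2 hl hu).ge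
  · exact (hs i).1 hl.symm

end

theorem stationarity_iff_active_at_bounds_general {n : ℕ} (f : (Fin n → ℝ) → ℝ)
    (l u : Fin n → ℝ) (hlu : ∀ i, l i < u i) (ε : ℝ)
    (x : Fin n → ℝ) (hx : ∀ i, l i ≤ x i ∧ x i ≤ u i)
    (hfree : ∀ i ∈ estN f l u ε x, grad f x i = 0) :
    IsBoxStationary f l u x ↔
      {i | i ∈ estAl f l u ε x ∧ l i < x i} ∪
        {i | i ∈ estAu f l u ε x ∧ x i < u i} = ∅ := by
  constructor
  · intro hs
    refine Set.eq_empty_iff_forall_notMem.mpr fun i => ?_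
    rintro (⟨⟨-, -, hg⟩, hlx⟩ | ⟨⟨-, -, hg⟩, hxu⟩)
    · exact (hs.grad_nonpos hlx (hx i).2).not_gt hg
    · exact (hs.grad_nonneg (hx i).1 hxu).not_gt hg
  · intro hempty
    have hAl : ∀ i ∈ estAl f l u ε x, ¬ l i < x i := fun i hi hlx =>
      (Set.eq_empty_iff_forall_notMem.mp hempty i) (Or.inl ⟨hi, hlx⟩)
    have hAu : ∀ i ∈ estAu f l u ε x, ¬ x i < u i := fun i hi hxu =>
      (Set.eq_empty_iff_forall_notMem.mp hempty i) (Or.inr ⟨hi, hxu⟩)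
    refine fun i => ⟨fun hxl => ?_, fun hxu => ?_, fun hlx hxu => ?_⟩
    · exact grad_nonneg_of_notMem_estAu hfree (notMem_estAu_of_eq_lower (hlu i) hxl)
    · exact grad_nonpos_of_notMem_estAl hfree (notMem_estAl_of_eq_upper (hlu i) hxu)
    · exact hfree i ⟨fun hi => hAl i hi hlx, fun hi => hAu i hi hxu⟩

/-- if the gradient vanishes on the non-active estimate, then stationarity
is equivalent to no estimated active variable being strictly inside its bound. -/
theorem stationarity_iff_active_at_bounds {n : ℕ} (f : (Fin n → ℝ) → ℝ)
    (hf : ContDiff ℝ 2 f) (l u : Fin n → ℝ) (hlu : ∀ i, l i < u i) (ε : ℝ) (hε : 0 < ε)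
    (x : Fin n → ℝ) (hx : ∀ i, l i ≤ x i ∧ x i ≤ u i)
    (hfree : ∀ i ∈ estN f l u ε x, grad f x i = 0) :
    IsBoxStationary f l u x ↔
      {i | i ∈ estAl f l u ε x ∧ l i < x i} ∪
        {i | i ∈ estAu f l u ε x ∧ x i < u i} = ∅ :=
  stationarity_iff_active_at_bounds_general f l u hlu ε x hx hfree
end

section
/- Let x̄ ∈ [l,u] with N(x̄) ≠ ∅ and g_{N(x̄)}(x̄) ≠ 0, let γ ∈ (0,1), σ₁ > 0, σ₂ > 0, and let d ∈ ℝⁿ satisfy d_i = 0 for all i ∈ A_l(x̄) ∪ A_u(x̄), Σ_{i∈N(x̄)} d_i·g_i(x̄) ≤ −σ₁·Σ_{i∈N(x̄)} g_i(x̄)², and Σ_{i∈N(x̄)} d_i² ≤ σ₂²·Σ_{i∈N(x̄)} g_i(x̄)². Then there exists ᾱ > 0 such that for all α ∈ (0, ᾱ], f([x̄ + α d]♯) − f(x̄) ≤ γ·α·g(x̄)ᵀd. -/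
/-
Every coordinate moved by `d` lies in `N(x̄)`. There `λ_i, μ_i` have the sign of `±g_i`, so
`g_i > 0` forces `l_i < x̄_i` and `g_i < 0` forces `x̄_i < u_i` (otherwise `i` would lie in
`A_l(x̄)` resp. `A_u(x̄)`). Hence for small `α` the projection only clips the step in directions
that do not hurt descent: `g(x̄)ᵀ([x̄ + αd]♯ - x̄) ≤ α g(x̄)ᵀd ≤ -α σ₁ ‖g_N(x̄)‖² < 0`.
The projection is 1-Lipschitz and fixes `x̄`, so the step has length `O(α)` and the first-order
expansion of `f` gives `f([x̄ + αd]♯) - f(x̄) ≤ α g(x̄)ᵀd + o(α) ≤ γ α g(x̄)ᵀd` for small `α`,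
as `γ < 1`.
-/

open Finset

open scoped Classical

open Filter Topology Asymptotics

theorem HasFDerivAt.isLittleO_comp_of_isBigO {E F G ι : Type*} [NormedAddCommGroup E]
    [NormedSpace ℝ E] [NormedAddCommGroup F] [NormedSpace ℝ F] [NormedAddCommGroup G]
    {f : E → F} {f' : E →L[ℝ] F} {x : E} (hf : HasFDerivAt f f' x) {l : Filter ι}
    {y : ι → E} {φ : ι → G} (hy : (fun i => y i - x) =O[l] φ) (hφ : Tendsto φ l (𝓝 0)) :
    (fun i => f (y i) - f x - f' (y i - x)) =o[l] φ := by
  have hyx : Tendsto y l (𝓝 x) := tendsto_sub_nhds_zero_iff.1 (hy.trans_tendsto hφ)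
  exact (hf.isLittleO.comp_tendsto hyx).trans_isBigO hy

theorem HasFDerivAt.eventually_armijo {E : Type*} [NormedAddCommGroup E] [NormedSpace ℝ E]
    {f : E → ℝ} {f' : E →L[ℝ] ℝ} {x : E} (hf : HasFDerivAt f f' x) {y : ℝ → E} {T γ : ℝ}
    (hγ : γ < 1) (hT : T < 0) (hy : (fun α => y α - x) =O[𝓝[>] 0] id)
    (hdesc : ∀ᶠ α in 𝓝[>] 0, f' (y α - x) ≤ α * T) :
    ∀ᶠ α in 𝓝[>] 0, f (y α) - f x ≤ γ * α * T := by
  have hrem := hf.isLittleO_comp_of_isBigO hy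
    (tendsto_id.mono_left nhdsWithin_le_nhds)
  have hc : 0 < (1 - γ) * -T := mul_pos (by linarith) (by linarith)
  filter_upwards [hrem.bound hc, hdesc, self_mem_nhdsWithin] with α hα hαT hpos
  rw [Real.norm_eq_abs, Real.norm_eq_abs, id, _root_.abs_of_pos (Set.mem_Ioi.1 hpos)] at hα
  linarith [le_abs_self (f (y α) - f x - f' (y α - x))]

lemma abs_min_max_sub_min_max_le (a b s t : ℝ) :
    |min b (max a s) - min b (max a t)| ≤ |s - t| := by
  refine (abs_min_sub_min_le_max _ _ _ _).trans ?_
  rw [sub_self, abs_zero, max_comm a s, max_comm a t]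
  exact max_le (abs_nonneg _) (abs_max_sub_max_le_abs _ _ _)

lemma eventually_mul_min_max_sub_le {a b t g d : ℝ} (ht : a ≤ t ∧ t ≤ b)
    (hlo : 0 < g → d ≠ 0 → a < t) (hhi : g < 0 → d ≠ 0 → t < b) :
    ∀ᶠ α in 𝓝 0, g * (min b (max a (t + α * d)) - t) ≤ α * (g * d) := by
  rcases eq_or_ne d 0 with rfl | hd
  · simp [max_eq_right ht.1, min_eq_right ht.2]
  have hpath : Tendsto (fun α : ℝ => t + α * d) (𝓝 0) (𝓝 t) :=
    (show Continuous (fun α : ℝ => t + α * d) by fun_prop).tendsto' 0 t (by simp)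
  rcases lt_trichotomy g 0 with hg | rfl | hg
  · filter_upwards [hpath.eventually (gt_mem_nhds (hhi hg hd))] with α hα
    have : t + α * d ≤ min b (max a (t + α * d)) := le_min hα.le (le_max_right _ _)
    nlinarith
  · simp
  · filter_upwards [hpath.eventually (lt_mem_nhds (hlo hg hd))] with α hα
    have : min b (max a (t + α * d)) ≤ t + α * d := (min_le_right _ _).trans (max_le hα.le le_rfl)
    nlinarith

section Box

variable {n : ℕ} {l u : Fin n → ℝ}

lemma projBox_eq_self {x : Fin n → ℝ} (hx : ∀ i, l i ≤ x i ∧ x i ≤ u i) :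
    projBox l u x = x :=
  funext fun i => by simp [projBox, max_eq_right (hx i).1, min_eq_right (hx i).2]

lemma norm_projBox_sub_le {x : Fin n → ℝ} (hx : ∀ i, l i ≤ x i ∧ x i ≤ u i) (y : Fin n → ℝ) :
    ‖projBox l u y - x‖ ≤ ‖y - x‖ := by
  refine (pi_norm_le_iff_of_nonneg (norm_nonneg _)).2 fun i => ?_
  calc ‖(projBox l u y - x) i‖ = |projBox l u y i - projBox l u x i| := by
        rw [projBox_eq_self hx, Pi.sub_apply, Real.norm_eq_abs]
    _ ≤ |y i - x i| := abs_min_max_sub_min_max_le _ _ _ _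
    _ ≤ ‖y - x‖ := norm_le_pi_norm (y - x) i

end Box

section Estimates

variable {n : ℕ} {f : (Fin n → ℝ) → ℝ} {l u x : Fin n → ℝ} {ε : ℝ} {i : Fin n}

lemma fderiv_apply_eq_sum_grad_mul (f : (Fin n → ℝ) → ℝ) (x v : Fin n → ℝ) :
    fderiv ℝ f x v = ∑ i, grad f x i * v i := by
  conv_lhs => rw [pi_eq_sum_univ' v]
  simp [map_sum, grad, mul_comm]

lemma lt_of_mem_estN_of_grad_pos (hε : 0 ≤ ε) (hx : l i ≤ x i) (hi : i ∈ estN f l u ε x)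
    (hg : 0 < grad f x i) : l i < x i := by
  refine hx.lt_of_ne fun hxl => hi.1 ⟨hx, ?_, hg⟩
  have hlam : 0 ≤ lamMul f l u x i :=
    mul_nonneg (div_nonneg (sq_nonneg _) (by positivity)) hg.le
  nlinarith [mul_nonneg hε hlam]

lemma lt_of_mem_estN_of_grad_neg (hε : 0 ≤ ε) (hx : x i ≤ u i) (hi : i ∈ estN f l u ε x)
    (hg : grad f x i < 0) : x i < u i := by
  refine hx.lt_of_ne fun hxu => hi.2 ⟨?_, hx, hg⟩
  have hmu : 0 ≤ muMul f l u x i :=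
    neg_nonneg.2 (mul_nonpos_of_nonneg_of_nonpos (div_nonneg (sq_nonneg _) (by positivity)) hg.le)
  nlinarith [mul_nonneg hε hmu]

end Estimates

theorem nonactive_descent_general {n : ℕ} (f : (Fin n → ℝ) → ℝ) (hf : ContDiff ℝ 2 f)
    (l u : Fin n → ℝ) (ε : ℝ) (hε : 0 < ε)
    (x : Fin n → ℝ) (hx : ∀ i, l i ≤ x i ∧ x i ≤ u i)
    (γ σ1 : ℝ) (hγ1 : γ < 1) (hσ1 : 0 < σ1)
    (hgN : ∃ i ∈ estN f l u ε x, grad f x i ≠ 0)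
    (d : Fin n → ℝ)
    (hd0 : ∀ i ∈ estAl f l u ε x ∪ estAu f l u ε x, d i = 0)
    (hd1 : ∑ i ∈ Finset.univ.filter (· ∈ estN f l u ε x), d i * grad f x i ≤
      -σ1 * ∑ i ∈ Finset.univ.filter (· ∈ estN f l u ε x), grad f x i ^ 2) :
    ∃ abar > (0 : ℝ), ∀ α : ℝ, 0 < α → α ≤ abar →
      f (projBox l u (fun i => x i + α * d i)) - f x ≤
        γ * α * ∑ i, grad f x i * d i := by
  set N := Finset.univ.filter (· ∈ estN f l u ε x)
  have hdN : ∀ i, d i ≠ 0 → i ∈ estN f l u ε x := fun i hdi =>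
    ⟨fun h => hdi (hd0 i (Or.inl h)), fun h => hdi (hd0 i (Or.inr h))⟩
  have hS : 0 < ∑ i ∈ N, grad f x i ^ 2 := by
    obtain ⟨i, hiN, hgi⟩ := hgN
    exact sum_pos' (fun _ _ => sq_nonneg _) ⟨i, by simpa [N] using hiN, by positivity⟩
  have hT : ∑ i, grad f x i * d i < 0 := by
    have hsupp : ∑ i ∈ N, d i * grad f x i = ∑ i, grad f x i * d i := by
      refine sum_subset_zero_on_sdiff (subset_univ N) (fun i hi => ?_)
        (fun i _ => mul_comm _ _)
      by_contra hne
      exact (mem_sdiff.1 hi).2 (by simpa [N] using hdN i (right_ne_zero_of_mul hne))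
    nlinarith
  have hstep : ∀ᶠ α in 𝓝 (0 : ℝ), fderiv ℝ f x (projBox l u (x + α • d) - x) ≤
      α * ∑ i, grad f x i * d i := by
    filter_upwards [eventually_all.2 fun i => eventually_mul_min_max_sub_le (hx i)
      (fun hg hdi => lt_of_mem_estN_of_grad_pos hε.le (hx i).1 (hdN i hdi) hg)
      (fun hg hdi => lt_of_mem_estN_of_grad_neg hε.le (hx i).2 (hdN i hdi) hg)] with α hα
    rw [fderiv_apply_eq_sum_grad_mul, mul_sum]
    exact sum_le_sum fun i _ => hα i
  have hpath : (fun α : ℝ => projBox l u (x + α • d) - x) =O[𝓝 0] id :=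
    IsBigO.of_bound ‖d‖ (Eventually.of_forall fun α => by
      simpa [norm_smul, mul_comm] using norm_projBox_sub_le hx (x + α • d))
  obtain ⟨abar, habar, hsub⟩ := mem_nhdsGT_iff_exists_Ioc_subset.1
    ((hf.differentiable two_ne_zero x).hasFDerivAt.eventually_armijo hγ1 hT
      (hpath.mono nhdsWithin_le_nhds) (hstep.filter_mono nhdsWithin_le_nhds))
  exact ⟨abar, habar, fun α hα hαle => hsub ⟨hα, hαle⟩⟩

/-- Armijo-type sufficient decrease along a gradient-related direction in
the subspace of the estimated non-active variables. -/
theorem nonactive_descent {n : ℕ} (f : (Fin n → ℝ) → ℝ) (hf : ContDiff ℝ 2 f)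
    (l u : Fin n → ℝ) (hlu : ∀ i, l i < u i) (ε : ℝ) (hε : 0 < ε)
    (x : Fin n → ℝ) (hx : ∀ i, l i ≤ x i ∧ x i ≤ u i)
    (γ σ1 σ2 : ℝ) (hγ0 : 0 < γ) (hγ1 : γ < 1) (hσ1 : 0 < σ1) (hσ2 : 0 < σ2)
    (hNne : (estN f l u ε x).Nonempty)
    (hgN : ∃ i ∈ estN f l u ε x, grad f x i ≠ 0)
    (d : Fin n → ℝ)
    (hd0 : ∀ i ∈ estAl f l u ε x ∪ estAu f l u ε x, d i = 0)
    (hd1 : ∑ i ∈ Finset.univ.filter (· ∈ estN f l u ε x), d i * grad f x i ≤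
      -σ1 * ∑ i ∈ Finset.univ.filter (· ∈ estN f l u ε x), grad f x i ^ 2)
    (hd2 : ∑ i ∈ Finset.univ.filter (· ∈ estN f l u ε x), d i ^ 2 ≤
      σ2 ^ 2 * ∑ i ∈ Finset.univ.filter (· ∈ estN f l u ε x), grad f x i ^ 2) :
    ∃ abar > (0 : ℝ), ∀ α : ℝ, 0 < α → α ≤ abar →
      f (projBox l u (fun i => x i + α * d i)) - f x ≤
        γ * α * ∑ i, grad f x i * d i :=
  nonactive_descent_general f hf l u ε hε x hx γ σ1 hγ1 hσ1 hgN d hd0 hd1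
end

section
/- Let x ∈ [l,u]. For every i ∈ A_l(x), the gradient component satisfies g_i(x) ≥ ((x_i − l_i)/ε)·[((l_i − x_i)² + (u_i − x_i)²)/(u_i − x_i)²], and consequently g_i(x)·(l_i − x_i) ≤ −(1/ε)·(l_i − x_i)². -/
/-!
Membership of `i` in `A_l(x)` says `a ≤ ε (w g)` for `a = x_i - l_i ≥ 0`, `g = g_i(x) > 0` and the
weight `w = (u_i - x_i)² / ((l_i - x_i)² + (u_i - x_i)²) ∈ [0, 1]`, whose inverse is the factor in
the first bound. If `a = 0` both bounds are trivial; if `a > 0` then `ε w > 0`, so one may divide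
by `ε w` for the first bound, and `w ≤ 1` turns it into `a / ε ≤ g` for the second.
-/

open Finset

section WeightedBound

variable {a w g ε : ℝ}

lemma mul_pos_and_pos_of_le_mul_mul (ha : 0 < a) (hg : 0 ≤ g) (h : a ≤ ε * (w * g)) :
    0 < ε * w ∧ 0 < g := by
  have hpos : 0 < ε * w * g := by linarith [mul_assoc ε w g]
  have hg' : 0 < g := lt_of_le_of_ne hg fun hg0 => by simp [← hg0] at hpos
  exact ⟨pos_of_mul_pos_left hpos hg'.le, hg'⟩

lemma div_mul_inv_le_of_le_mul_mul (ha : 0 ≤ a) (hg : 0 ≤ g) (h : a ≤ ε * (w * g)) :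
    a / ε * w⁻¹ ≤ g := by
  rcases ha.eq_or_lt with rfl | ha
  · simpa using hg
  obtain ⟨hεw, -⟩ := mul_pos_and_pos_of_le_mul_mul ha hg h
  rw [div_eq_mul_inv, mul_assoc, ← mul_inv, ← div_eq_mul_inv, div_le_iff₀ hεw]
  linarith [mul_comm g (ε * w), mul_assoc ε w g]

lemma sq_div_le_mul_of_le_mul_mul (ha : 0 ≤ a) (hg : 0 ≤ g) (hw₀ : 0 ≤ w) (hw₁ : w ≤ 1)
    (h : a ≤ ε * (w * g)) : a ^ 2 / ε ≤ g * a := by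
  rcases ha.eq_or_lt with rfl | ha
  · simp
  obtain ⟨hεw, hg⟩ := mul_pos_and_pos_of_le_mul_mul ha hg h
  have hε : 0 < ε := pos_of_mul_pos_left hεw hw₀
  have hdiv : a / ε ≤ g := by
    rw [div_le_iff₀ hε]
    nlinarith [mul_le_mul_of_nonneg_left hw₁ (mul_pos hε hg).le]
  calc a ^ 2 / ε = a / ε * a := by ring
    _ ≤ g * a := mul_le_mul_of_nonneg_right hdiv ha.le

end WeightedBound

theorem lower_active_gradient_bound_general {n : ℕ} (f : (Fin n → ℝ) → ℝ) (l u : Fin n → ℝ) (ε : ℝ)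
    (x : Fin n → ℝ) (i : Fin n) (hi : i ∈ estAl f l u ε x) :
    grad f x i ≥ (x i - l i) / ε *
      (((l i - x i) ^ 2 + (u i - x i) ^ 2) / (u i - x i) ^ 2) ∧
    grad f x i * (l i - x i) ≤ -(1 / ε) * (l i - x i) ^ 2 := by
  obtain ⟨hl, hle, hg⟩ := hi
  set w := (u i - x i) ^ 2 / ((l i - x i) ^ 2 + (u i - x i) ^ 2)
  have ha : 0 ≤ x i - l i := sub_nonneg.mpr hl
  have h : x i - l i ≤ ε * (w * grad f x i) := by rw [lamMul] at hle; linarith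
  have hw₁ : w ≤ 1 := div_le_one_of_le₀ (le_add_of_nonneg_left (sq_nonneg _)) (by positivity)
  constructor
  · rw [ge_iff_le, ← inv_div ((u i - x i) ^ 2)]
    exact div_mul_inv_le_of_le_mul_mul ha hg.le h
  · have := sq_div_le_mul_of_le_mul_mul ha hg.le (by positivity) hw₁ h
    linear_combination this

/-- gradient lower bound for components estimated active at the lower bound. -/
theorem lower_active_gradient_bound {n : ℕ} (f : (Fin n → ℝ) → ℝ) (hf : ContDiff ℝ 2 f)
    (l u : Fin n → ℝ) (hlu : ∀ i, l i < u i) (ε : ℝ) (hε : 0 < ε)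
    (x : Fin n → ℝ) (hx : ∀ i, l i ≤ x i ∧ x i ≤ u i)
    (i : Fin n) (hi : i ∈ estAl f l u ε x) :
    grad f x i ≥ (x i - l i) / ε *
      (((l i - x i) ^ 2 + (u i - x i) ^ 2) / (u i - x i) ^ 2) ∧
    grad f x i * (l i - x i) ≤ -(1 / ε) * (l i - x i) ^ 2 :=
  lower_active_gradient_bound_general f l u ε x i hi
end

section
/- Let x ∈ [l,u]. For every i ∈ A_u(x), the gradient component satisfies g_i(x) ≤ ((x_i − u_i)/ε)·[((l_i − x_i)² + (u_i − x_i)²)/(l_i − x_i)²], and consequently g_i(x)·(u_i − x_i) ≤ −(1/ε)·(u_i − x_i)². -/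
open Finset

/-!
Membership `i ∈ A_u(x)` says exactly `ε θ g ≤ x - u`, where `g = g_i(x)` and
`θ = (l - x)² / ((l - x)² + (u - x)²) ∈ [0, 1]` is the weight in `μ_i`. Dividing by `ε θ`
gives the first bound; since `g < 0` and `θ ≤ 1`, also `ε g ≤ ε θ g ≤ -(u - x)`, and
multiplying by `u - x ≥ 0` gives the second.
-/

section WeightedBound

variable {𝕜 : Type*} [Field 𝕜] [LinearOrder 𝕜] [IsStrictOrderedRing 𝕜] {ε θ g c d : 𝕜}

-- At `θ = 0` the right-hand side is `0` (as `0⁻¹ = 0`), so the bound reduces to `g ≤ 0`.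
theorem le_div_mul_inv_of_mul_le (hε : 0 < ε) (hθ : 0 ≤ θ) (hg : g ≤ 0) (h : ε * θ * g ≤ c) :
    g ≤ c / ε * θ⁻¹ := by
  rcases hθ.eq_or_lt with rfl | hθ
  · simpa using hg
  · rw [div_mul_eq_mul_div, ← div_eq_mul_inv, div_div, le_div_iff₀ (mul_pos hθ hε)]
    linarith

theorem mul_le_neg_sq_div_of_mul_le (hε : 0 < ε) (hθ : θ ≤ 1) (hg : g ≤ 0) (hd : 0 ≤ d)
    (h : ε * θ * g ≤ -d) : g * d ≤ -(1 / ε) * d ^ 2 := by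
  have hgθ : g ≤ θ * g := by nlinarith
  have hεgd : ε * g * d ≤ -d * d :=
    mul_le_mul_of_nonneg_right (by linarith [mul_le_mul_of_nonneg_left hgθ hε.le]) hd
  rw [neg_mul, one_div_mul_eq_div, le_neg, div_le_iff₀ hε]
  linarith

end WeightedBound

theorem upper_active_gradient_bound_general {n : ℕ} (f : (Fin n → ℝ) → ℝ)
    (l u : Fin n → ℝ) (ε : ℝ) (hε : 0 < ε)
    (x : Fin n → ℝ) (i : Fin n) (hi : i ∈ estAu f l u ε x) :
    grad f x i ≤ (x i - u i) / ε *
      (((l i - x i) ^ 2 + (u i - x i) ^ 2) / (l i - x i) ^ 2) ∧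
    grad f x i * (u i - x i) ≤ -(1 / ε) * (u i - x i) ^ 2 := by
  set θ := (l i - x i) ^ 2 / ((l i - x i) ^ 2 + (u i - x i) ^ 2)
  obtain ⟨hμ, hxu, hg⟩ := hi
  have hθg : ε * θ * grad f x i ≤ x i - u i := by
    simp only [muMul] at hμ
    linarith
  refine ⟨?_, ?_⟩
  · rw [← inv_div ((l i - x i) ^ 2)]
    exact le_div_mul_inv_of_mul_le hε (div_nonneg (sq_nonneg _) (by positivity)) hg.le hθg
  · refine mul_le_neg_sq_div_of_mul_le hε ?_ hg.le (sub_nonneg.mpr hxu) (by linarith)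
    exact div_le_one_of_le₀ (le_add_of_nonneg_right (sq_nonneg _)) (by positivity)

/-- gradient upper bound for components estimated active at the upper bound. -/
theorem upper_active_gradient_bound {n : ℕ} (f : (Fin n → ℝ) → ℝ) (hf : ContDiff ℝ 2 f)
    (l u : Fin n → ℝ) (hlu : ∀ i, l i < u i) (ε : ℝ) (hε : 0 < ε)
    (x : Fin n → ℝ) (hx : ∀ i, l i ≤ x i ∧ x i ≤ u i)
    (i : Fin n) (hi : i ∈ estAu f l u ε x) :
    grad f x i ≤ (x i - u i) / ε *
      (((l i - x i) ^ 2 + (u i - x i) ^ 2) / (l i - x i) ^ 2) ∧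
    grad f x i * (u i - x i) ≤ -(1 / ε) * (u i - x i) ^ 2 :=
  upper_active_gradient_bound_general f l u ε hε x i hi
end
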